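/- arXiv:1809.08690 — 3 statements merged into one kernel-verified Lean document; each statement's English description precedes it below -/
import Mathlib

section
/- Let α, β, γ be positive irrational numbers with α + β + γ = 1 and α, β < 1/2. With B̃_β = {b(n) - [b(n) ∈ B_α] : n ≥ 1}, B̃_γ = ℕ \ (B_α ∪ B̃_β), and E_γ(m) = B̃_γ(m) - B_γ(m), one has E_γ(m) = 1 if u_m + v_m > 1 and (u_m < 1-α or v_m < 1-β), and E_γ(m) = 0 otherwise, where u_m = {(m+1)α}, v_m = {(m+1)β}. -/
open scoped Classical

def beatty (α : ℝ) : Set ℤ := {m | ∃ n : ℕ, 0 < n ∧ m = ⌊(n : ℝ) / α⌋}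

noncomputable def countLe (S : Set ℤ) (m : ℤ) : ℕ :=
  ((Finset.Icc 1 m).filter (fun k => k ∈ S)).card

noncomputable def btil (α β : ℝ) (n : ℕ) : ℤ :=
  if ⌊(n : ℝ) / β⌋ ∈ beatty α then ⌊(n : ℝ) / β⌋ - 1 else ⌊(n : ℝ) / β⌋

/-!
For irrational `θ ∈ (0, 1)`, `⌊n / θ⌋ ≤ m ↔ n < (m + 1) θ`, so the counting function of the Beatty
set is `B_θ(m) = ⌊(m + 1) θ⌋`; comparing `m` with `m + 1` gives `m + 1 ∈ B_θ ↔ 1 - θ ≤ {(m + 1) θ}`.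
Lowering `b(n)` by one when `b(n) ∈ B_α` moves it across `m` only when `b(n) = m + 1`, so
`B̃_β(m) = B_β(m) + [m + 1 ∈ B_α ∩ B_β]`. As `α < 1/2`, `B_α` has no two consecutive elements, so
`B̃_β` avoids `B_α` and `B̃_γ(m) = m - B_α(m) - B̃_β(m)`. Since `(m + 1)(α + β + γ) = m + 1` and
`(m + 1) γ ∉ ℤ`, `m - ⌊(m + 1) α⌋ - ⌊(m + 1) β⌋ - ⌊(m + 1) γ⌋ = [u_m + v_m > 1]`, and the corner
`u_m ≥ 1 - α, v_m ≥ 1 - β` lies inside `u_m + v_m > 1` because `α + β < 1`.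
-/

lemma floor_div_add_le_floor_div {θ : ℝ} (hθ : 0 < θ) {c : ℤ} (hc : c * θ ≤ 1) {a b : ℕ}
    (hab : a < b) : ⌊(a : ℝ) / θ⌋ + c ≤ ⌊(b : ℝ) / θ⌋ := by
  rw [← Int.floor_add_intCast]
  apply Int.floor_mono
  have hab' : (a : ℝ) + 1 ≤ b := by exact_mod_cast hab
  calc (a : ℝ) / θ + c ≤ a / θ + 1 / θ := by gcongr; rwa [le_div_iff₀ hθ]
    _ = (a + 1) / θ := by ring
    _ ≤ b / θ := by gcongr

lemma Irrational.natCast_add_one_mul {θ : ℝ} (h : Irrational θ) (m : ℕ) :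
    Irrational (((m : ℝ) + 1) * θ) := by
  simpa using h.natCast_mul m.succ_ne_zero

lemma floor_div_le_iff_le_floor_mul {θ : ℝ} (hθ : 0 < θ) (hirr : Irrational θ) (n m : ℕ) :
    ⌊(n : ℝ) / θ⌋ ≤ m ↔ n ≤ ⌊((m : ℝ) + 1) * θ⌋₊ := by
  have hne : (n : ℝ) ≠ ((m : ℝ) + 1) * θ := ((hirr.natCast_add_one_mul m).ne_nat n).symm
  rw [Int.floor_le_iff, div_lt_iff₀ hθ, Nat.le_floor_iff (by positivity)]
  push_cast
  exact ⟨le_of_lt, fun h => lt_of_le_of_ne h hne⟩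

lemma countLe_setOf_eq_of_strictMono {f : ℕ → ℤ} (hf : StrictMono f)
    (hpos : ∀ n, 0 < n → 0 < f n) {m : ℤ} {N : ℕ} (hN : ∀ n, 0 < n → (f n ≤ m ↔ n ≤ N)) :
    countLe {x | ∃ n : ℕ, 0 < n ∧ x = f n} m = N := by
  have hfilter : (Finset.Icc 1 m).filter (· ∈ {x | ∃ n : ℕ, 0 < n ∧ x = f n}) =
      (Finset.Icc 1 N).image f := by
    ext x
    simp only [Finset.mem_filter, Finset.mem_Icc, Finset.mem_image, Set.mem_ofPred_eq]
    constructor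
    · rintro ⟨⟨-, hxm⟩, n, hn, rfl⟩
      exact ⟨n, ⟨hn, (hN n hn).1 hxm⟩, rfl⟩
    · rintro ⟨n, ⟨hn, hnN⟩, rfl⟩
      exact ⟨⟨hpos n hn, (hN n hn).2 hnN⟩, n, hn, rfl⟩
  rw [countLe, hfilter, Finset.card_image_of_injective _ hf.injective, Nat.card_Icc,
    Nat.add_sub_cancel]

lemma countLe_add_one (S : Set ℤ) {k : ℤ} (hk : 0 ≤ k) :
    countLe S (k + 1) = countLe S k + if k + 1 ∈ S then 1 else 0 := by
  rw [countLe, countLe, ← Finset.insert_Icc_right_eq_Icc_add_one (by omega), Finset.filter_insert]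
  split_ifs
  · exact Finset.card_insert_of_notMem (by simp)
  · rfl

lemma strictMono_floor_natCast_div {θ : ℝ} (h0 : 0 < θ) (h1 : θ ≤ 1) :
    StrictMono fun n : ℕ => ⌊(n : ℝ) / θ⌋ := fun a b hab =>
  Int.add_one_le_iff.1 (floor_div_add_le_floor_div h0 (by simpa using h1) hab)

lemma floor_natCast_div_pos {θ : ℝ} (h0 : 0 < θ) (h1 : θ ≤ 1) {n : ℕ} (hn : 0 < n) :
    0 < ⌊(n : ℝ) / θ⌋ := by
  rw [Int.floor_pos, le_div_iff₀ h0, one_mul]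
  exact h1.trans (by exact_mod_cast hn)

lemma countLe_beatty {θ : ℝ} (hirr : Irrational θ) (h0 : 0 < θ) (h1 : θ < 1) (m : ℕ) :
    (countLe (beatty θ) m : ℤ) = ⌊((m : ℝ) + 1) * θ⌋ := by
  rw [beatty, countLe_setOf_eq_of_strictMono (strictMono_floor_natCast_div h0 h1.le)
    (fun _ => floor_natCast_div_pos h0 h1.le) (fun n _ => floor_div_le_iff_le_floor_mul h0 hirr n m),
    Int.natCast_floor_eq_floor (by positivity)]

lemma floor_add_eq_floor_add_ite {x θ : ℝ} (h0 : 0 ≤ θ) (h1 : θ ≤ 1) :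
    ⌊x + θ⌋ = ⌊x⌋ + if 1 - θ ≤ Int.fract x then 1 else 0 := by
  have hsplit : ⌊x + θ⌋ = ⌊x⌋ + ⌊Int.fract x + θ⌋ := by
    rw [← Int.floor_intCast_add, ← add_assoc, Int.floor_add_fract]
  have := Int.fract_nonneg x
  have := Int.fract_lt_one x
  rw [hsplit, add_right_inj, Int.floor_eq_iff]
  split_ifs <;> constructor <;> push_cast <;> linarith

lemma add_one_mem_beatty_iff {θ : ℝ} (hirr : Irrational θ) (h0 : 0 < θ) (h1 : θ < 1) (m : ℕ) :
    (m : ℤ) + 1 ∈ beatty θ ↔ 1 - θ ≤ Int.fract (((m : ℝ) + 1) * θ) := by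
  have hsucc := countLe_add_one (beatty θ) (Int.natCast_nonneg m)
  have hm := countLe_beatty hirr h0 h1 m
  have hm1 := countLe_beatty hirr h0 h1 (m + 1)
  rw [Nat.cast_add_one, Nat.cast_add_one, add_one_mul ((m : ℝ) + 1),
    floor_add_eq_floor_add_ite h0.le h1.le, hsucc] at hm1
  push_cast [Nat.cast_ite] at hm1
  by_cases hmem : (m : ℤ) + 1 ∈ beatty θ <;>
    by_cases hfr : 1 - θ ≤ Int.fract (((m : ℝ) + 1) * θ) <;>
    simp only [hmem, hfr, if_true, if_false] at hm1 ⊢ <;> linarith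

lemma add_one_notMem_beatty {α : ℝ} (h0 : 0 < α) (h2 : α ≤ 1 / 2) {x : ℤ} (hx : x ∈ beatty α) :
    x + 1 ∉ beatty α := by
  rintro ⟨q, -, hq⟩
  obtain ⟨p, -, rfl⟩ := hx
  rcases lt_trichotomy p q with h | rfl | h
  · have := floor_div_add_le_floor_div h0 (c := 2) (by push_cast; linarith) h
    omega
  · omega
  · have := floor_div_add_le_floor_div h0 (c := 1) (by push_cast; linarith) h
    omega

lemma btil_notMem_beatty {α : ℝ} (h0 : 0 < α) (h2 : α ≤ 1 / 2) (β : ℝ) (n : ℕ) :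
    btil α β n ∉ beatty α := by
  unfold btil
  split_ifs with h
  · exact fun h' => add_one_notMem_beatty h0 h2 h' (by simpa using h)
  · exact h

lemma btil_strictMono (α : ℝ) {β : ℝ} (h0 : 0 < β) (h2 : β ≤ 1 / 2) : StrictMono (btil α β) := by
  intro a b hab
  have := floor_div_add_le_floor_div h0 (c := 2) (by push_cast; linarith) hab
  unfold btil
  split_ifs <;> omega

lemma btil_pos (α : ℝ) {β : ℝ} (h0 : 0 < β) (h2 : β ≤ 1 / 2) {n : ℕ} (hn : 0 < n) :
    0 < btil α β n := by
  have : 2 ≤ ⌊(n : ℝ) / β⌋ := by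
    rw [Int.le_floor, le_div_iff₀ h0]
    have : (1 : ℝ) ≤ n := by exact_mod_cast hn
    push_cast
    linarith
  unfold btil
  split_ifs <;> omega

lemma btil_le_iff (α β : ℝ) (n : ℕ) (m : ℤ) :
    btil α β n ≤ m ↔ ⌊(n : ℝ) / β⌋ ≤ m + if m + 1 ∈ beatty α then 1 else 0 := by
  unfold btil
  by_cases hb : ⌊(n : ℝ) / β⌋ = m + 1
  · by_cases hmem : m + 1 ∈ beatty α <;> simp [hb, hmem]
  · split_ifs <;> omega

lemma countLe_btil {α β : ℝ} (hirr : Irrational β) (h0 : 0 < β) (h2 : β ≤ 1 / 2) (m : ℕ) :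
    countLe {x | ∃ n : ℕ, 0 < n ∧ x = btil α β n} m =
      countLe (beatty β) m + if (m : ℤ) + 1 ∈ beatty α ∧ (m : ℤ) + 1 ∈ beatty β then 1 else 0 := by
  have hcount (k : ℕ) (hk : ∀ n, btil α β n ≤ m ↔ ⌊(n : ℝ) / β⌋ ≤ k) :
      countLe {x | ∃ n : ℕ, 0 < n ∧ x = btil α β n} m = countLe (beatty β) k := by
    have hfloor := floor_div_le_iff_le_floor_mul h0 hirr
    rw [countLe_setOf_eq_of_strictMono (btil_strictMono α h0 h2) (fun _ => btil_pos α h0 h2)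
      (fun n _ => (hk n).trans (hfloor n k)), beatty,
      countLe_setOf_eq_of_strictMono (strictMono_floor_natCast_div h0 (by linarith))
        (fun _ => floor_natCast_div_pos h0 (by linarith)) (fun n _ => hfloor n k)]
  by_cases hα : (m : ℤ) + 1 ∈ beatty α
  · rw [hcount (m + 1) (fun n => by rw [btil_le_iff, if_pos hα]; push_cast; rfl),
      Nat.cast_add_one, countLe_add_one _ (Int.natCast_nonneg m)]
    simp only [hα, true_and]
  · rw [hcount m (fun n => by rw [btil_le_iff, if_neg hα, add_zero])]
    simp only [hα, false_and, if_false, add_zero]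

lemma countLe_add_countLe_add_countLe {S T : Set ℤ} (hST : Disjoint S T) (m : ℕ) :
    countLe {x | 0 < x ∧ x ∉ S ∧ x ∉ T} m + countLe S m + countLe T m = m := by
  have hrest : countLe {x | 0 < x ∧ x ∉ S ∧ x ∉ T} m =
      ((Finset.Icc 1 (m : ℤ)).filter fun x => ¬(x ∈ S ∨ x ∈ T)).card := by
    unfold countLe
    congr 1
    ext x
    simp only [Finset.mem_filter, Finset.mem_Icc, Set.mem_ofPred_eq, not_or]
    constructor
    · exact fun ⟨hx, _, hS, hT⟩ => ⟨hx, hS, hT⟩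
    · exact fun ⟨hx, hS, hT⟩ => ⟨hx, by omega, hS, hT⟩
  have hdisj : Disjoint ((Finset.Icc 1 (m : ℤ)).filter (· ∈ S))
      ((Finset.Icc 1 (m : ℤ)).filter (· ∈ T)) :=
    Finset.disjoint_filter.2 fun _ _ h => Set.disjoint_left.1 hST h
  rw [hrest, countLe, countLe, add_assoc, ← Finset.card_union_of_disjoint hdisj,
    ← Finset.filter_or, add_comm, Finset.card_filter_add_card_filter_not, Int.card_Icc]
  omega

lemma floor_add_floor_add_floor_of_add_eq_int {x y z : ℝ} {k : ℤ} (h : x + y + z = k)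
    (hz : Int.fract z ≠ 0) :
    ⌊x⌋ + ⌊y⌋ + ⌊z⌋ = k - if 1 < Int.fract x + Int.fract y then 2 else 1 := by
  obtain ⟨n, hn⟩ : ∃ n : ℤ, n = k - (⌊x⌋ + ⌊y⌋ + ⌊z⌋) := ⟨_, rfl⟩
  have hfract : (n : ℝ) = Int.fract x + Int.fract y + Int.fract z := by
    rw [hn]
    push_cast
    rw [← h]
    unfold Int.fract
    ring
  have := Int.fract_nonneg x
  have := Int.fract_nonneg y
  have := Int.fract_lt_one x
  have := Int.fract_lt_one y
  have := Int.fract_lt_one z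
  have := (Int.fract_nonneg z).lt_of_ne' hz
  split_ifs with h
  · have h1 : (1 : ℝ) < n := by linarith
    have h3 : (n : ℝ) < 3 := by linarith
    norm_cast at h1 h3
    omega
  · have h0 : (0 : ℝ) < n := by linarith
    have h2 : (n : ℝ) < 2 := by linarith
    norm_cast at h0 h2
    omega

lemma ite_sub_ite_eq_ite_of_add_lt_one {u v a b : ℝ} (hab : a + b < 1) :
    ((if 1 < u + v then 1 else 0) - if 1 - a ≤ u ∧ 1 - b ≤ v then 1 else 0 : ℤ) =
      if 1 < u + v ∧ (u < 1 - a ∨ v < 1 - b) then 1 else 0 := by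
  by_cases hcorner : 1 - a ≤ u ∧ 1 - b ≤ v
  · have huv : 1 < u + v := by linarith [hcorner.1, hcorner.2]
    rw [if_pos huv, if_pos hcorner, sub_self,
      if_neg fun h => by rcases h.2 with h' | h' <;> linarith]
  · have hlt : u < 1 - a ∨ v < 1 - b := by
      simpa only [not_and_or, not_le] using hcorner
    simp only [hlt, and_true, if_neg hcorner, sub_zero]

theorem Egamma_formula_general (α β γ : ℝ)
    (hirra : Irrational α) (hirrb : Irrational β) (hirrc : Irrational γ)
    (ha : 0 < α) (hb : 0 < β) (hc : 0 < γ) (hsum : α + β + γ = 1)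
    (ha2 : α < 1 / 2) (hb2 : β < 1 / 2)
    (Btβ : Set ℤ) (hBtβ : Btβ = {x : ℤ | ∃ n : ℕ, 0 < n ∧ x = btil α β n})
    (Btγ : Set ℤ) (hBtγ : Btγ = {x : ℤ | 0 < x ∧ x ∉ beatty α ∧ x ∉ Btβ})
    (m : ℕ) :
    (countLe Btγ (m : ℤ) : ℤ) - countLe (beatty γ) (m : ℤ) =
      if 1 < Int.fract (((m : ℝ) + 1) * α) + Int.fract (((m : ℝ) + 1) * β) ∧
          (Int.fract (((m : ℝ) + 1) * α) < 1 - α ∨ Int.fract (((m : ℝ) + 1) * β) < 1 - β)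
      then 1 else 0 := by
  have hdisj : Disjoint (beatty α) Btβ := by
    rw [hBtβ, Set.disjoint_right]
    rintro _ ⟨n, -, rfl⟩
    exact btil_notMem_beatty ha ha2.le β n
  have hpart := countLe_add_countLe_add_countLe hdisj m
  rw [← hBtγ] at hpart
  have hcountBtβ := countLe_btil (α := α) hirrb hb hb2.le m
  rw [← hBtβ, add_one_mem_beatty_iff hirra ha (by linarith),
    add_one_mem_beatty_iff hirrb hb (by linarith)] at hcountBtβ
  have hcountα := countLe_beatty hirra ha (by linarith) m
  have hcountβ := countLe_beatty hirrb hb (by linarith) m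
  have hcountγ := countLe_beatty hirrc hc (by linarith) m
  have hfloor := floor_add_floor_add_floor_of_add_eq_int (x := ((m : ℝ) + 1) * α)
    (y := ((m : ℝ) + 1) * β) (z := ((m : ℝ) + 1) * γ) (k := m + 1)
    (by push_cast; linear_combination ((m : ℝ) + 1) * hsum)
    (Int.fract_ne_zero_iff.2 fun ⟨n, hn⟩ => (hirrc.natCast_add_one_mul m).ne_int n hn.symm)
  rw [← ite_sub_ite_eq_ite_of_add_lt_one (by linarith)]
  split_ifs at hcountBtβ hfloor ⊢ <;> omega

theorem Egamma_formula (α β γ : ℝ)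
    (hirra : Irrational α) (hirrb : Irrational β) (hirrc : Irrational γ)
    (ha : 0 < α) (hb : 0 < β) (hc : 0 < γ) (hsum : α + β + γ = 1)
    (ha2 : α < 1 / 2) (hb2 : β < 1 / 2)
    (Btβ : Set ℤ) (hBtβ : Btβ = {x : ℤ | ∃ n : ℕ, 0 < n ∧ x = btil α β n})
    (Btγ : Set ℤ) (hBtγ : Btγ = {x : ℤ | 0 < x ∧ x ∉ beatty α ∧ x ∉ Btβ})
    (m : ℕ) (hm : 0 < m) :
    (countLe Btγ (m : ℤ) : ℤ) - countLe (beatty γ) (m : ℤ) =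
      if 1 < Int.fract (((m : ℝ) + 1) * α) + Int.fract (((m : ℝ) + 1) * β) ∧
          (Int.fract (((m : ℝ) + 1) * α) < 1 - α ∨ Int.fract (((m : ℝ) + 1) * β) < 1 - β)
      then 1 else 0 :=
  Egamma_formula_general α β γ hirra hirrb hirrc ha hb hc hsum ha2 hb2 Btβ hBtβ Btγ hBtγ m
end

section
/- Let α, β, γ be positive irrational numbers with α + β + γ = 1 and α, β < 1/2. With B̃_β and B̃_γ defined as in the Theorem 3 construction, a positive integer m belongs to B̃_γ if and only if u_m > α and v_m > β and (u_m < 1 - α or v_m < 1 - β), where u_m = {(m+1)α} and v_m = {(m+1)β}. -/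
open scoped Classical

/-! For irrational `α > 0` and `p > 0`, `p = ⌊n / α⌋` for some `n > 0` exactly when an integer lies
in `[p α, (p + 1) α)`, i.e. when `{(p + 1) α} < α`; for `p + 1` the same condition reads
`{(p + 1) α} ≥ 1 - α`. Unfolding `B̃_β`, membership of `m` in `B̃_γ` becomes a Boolean combination
of four such conditions on `u_m` and `v_m`, and irrationality rules out the boundary cases
`u_m = α` and `v_m = β`. -/

theorem Int.fract_add_lt_iff_le_fract {x a : ℝ} (ha0 : 0 ≤ a) (ha1 : a < 1) :
    Int.fract (x + a) < a ↔ 1 - a ≤ Int.fract x := by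
  have hx0 := Int.fract_nonneg x
  have hx1 := Int.fract_lt_one x
  have hshift : Int.fract (Int.fract x + a) = Int.fract (x + a) := by
    rw [← Int.fract_add_intCast (Int.fract x + a) ⌊x⌋, add_right_comm, Int.fract_add_floor]
  rw [← hshift]
  rcases lt_or_ge (Int.fract x + a) 1 with h | h
  · rw [Int.fract_eq_self.2 ⟨by linarith, h⟩]
    constructor <;> intro <;> linarith
  · rw [← Int.fract_sub_one, Int.fract_eq_self.2 ⟨by linarith, by linarith⟩]
    constructor <;> intro <;> linarith

theorem Irrational.fract_ne {x y : ℝ} (h : Irrational (x - y)) : Int.fract x ≠ y := fun hxy ↦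
  have ⟨_, _, z, hz⟩ := Int.fract_eq_iff.1 hxy
  h.ne_int z hz

theorem mem_beatty_iff_fract_lt {α : ℝ} (hirr : Irrational α) (hα : 0 < α) {p : ℤ}
    (hp : 0 < p) :
    p ∈ beatty α ↔ Int.fract ((p + 1) * α) < α := by
  suffices p ∈ beatty α ↔ p * α < ⌊(p + 1) * α⌋ by
    rw [this, Int.fract]; constructor <;> intro <;> linarith
  have hirr' : Irrational ((p + 1) * α) := mod_cast hirr.intCast_mul (by omega : p + 1 ≠ 0)
  have hfloor : (⌊(p + 1) * α⌋ : ℝ) < (p + 1) * α := (Int.floor_le _).lt_of_ne (hirr'.ne_int _).symm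
  constructor
  · rintro ⟨n, -, hpn⟩
    rw [eq_comm, Int.floor_eq_iff, le_div_iff₀ hα, div_lt_iff₀ hα] at hpn
    have hne : (p : ℝ) * α ≠ n := mod_cast (hirr.intCast_mul hp.ne').ne_nat n
    calc (p : ℝ) * α < n := hpn.1.lt_of_ne hne
      _ ≤ ⌊(p + 1) * α⌋ := mod_cast Int.le_floor.2 (by push_cast; exact hpn.2.le)
  · intro h
    have hpos : 0 < ⌊(p + 1) * α⌋ := by
      exact_mod_cast (by positivity : (0 : ℝ) < p * α).trans h
    obtain ⟨n, hn⟩ := Int.eq_ofNat_of_zero_le hpos.le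
    rw [hn, Int.cast_natCast] at h hfloor
    refine ⟨n, by omega, ?_⟩
    rw [eq_comm, Int.floor_eq_iff, le_div_iff₀ hα, div_lt_iff₀ hα]
    exact ⟨h.le, hfloor⟩

theorem notMem_beatty_iff_lt_fract {α : ℝ} (hirr : Irrational α) (hα : 0 < α) {p : ℤ}
    (hp : 0 < p) :
    p ∉ beatty α ↔ α < Int.fract ((p + 1) * α) := by
  have hirr' : Irrational ((p + 1) * α - α) := by
    rw [add_one_mul, add_sub_cancel_right]; exact hirr.intCast_mul hp.ne'
  rw [mem_beatty_iff_fract_lt hirr hα hp, not_lt]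
  exact hirr'.fract_ne.symm.le_iff_lt

theorem add_one_notMem_beatty_iff_fract_lt {α : ℝ} (hirr : Irrational α) (hα : 0 < α)
    (hα1 : α < 1) {p : ℤ} (hp : 0 < p) :
    p + 1 ∉ beatty α ↔ Int.fract ((p + 1) * α) < 1 - α := by
  rw [mem_beatty_iff_fract_lt hirr hα (by omega), Int.cast_add, Int.cast_one, add_one_mul _ α,
    Int.fract_add_lt_iff_le_fract hα.le hα1, not_le]

theorem exists_btil_eq_iff (α β : ℝ) (x : ℤ) :
    (∃ n : ℕ, 0 < n ∧ x = btil α β n) ↔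
      (x ∈ beatty β ∧ x ∉ beatty α) ∨ (x + 1 ∈ beatty β ∧ x + 1 ∈ beatty α) := by
  constructor
  · rintro ⟨n, hn, rfl⟩
    by_cases hmem : ⌊(n : ℝ) / β⌋ ∈ beatty α
    · rw [btil, if_pos hmem, sub_add_cancel]
      exact .inr ⟨⟨n, hn, rfl⟩, hmem⟩
    · rw [btil, if_neg hmem]
      exact .inl ⟨⟨n, hn, rfl⟩, hmem⟩
  · rintro (⟨⟨n, hn, rfl⟩, hα⟩ | ⟨⟨n, hn, hx⟩, hα⟩)
    · exact ⟨n, hn, by rw [btil, if_neg hα]⟩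
    · rw [hx] at hα
      exact ⟨n, hn, by rw [btil, if_pos hα, ← hx, add_sub_cancel_right]⟩

theorem Btgamma_mem_iff_general (α β : ℝ)
    (hirra : Irrational α) (hirrb : Irrational β)
    (ha : 0 < α) (hb : 0 < β)
    (ha2 : α < 1 / 2) (hb2 : β < 1 / 2)
    (Btβ : Set ℤ) (hBtβ : Btβ = {x : ℤ | ∃ n : ℕ, 0 < n ∧ x = btil α β n})
    (Btγ : Set ℤ) (hBtγ : Btγ = {x : ℤ | 0 < x ∧ x ∉ beatty α ∧ x ∉ Btβ})
    (m : ℕ) (hm : 0 < m) :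
    (m : ℤ) ∈ Btγ ↔
      α < Int.fract (((m : ℝ) + 1) * α) ∧ β < Int.fract (((m : ℝ) + 1) * β) ∧
        (Int.fract (((m : ℝ) + 1) * α) < 1 - α ∨ Int.fract (((m : ℝ) + 1) * β) < 1 - β) := by
  have hm' : (0 : ℤ) < m := by exact_mod_cast hm
  have hmα := notMem_beatty_iff_lt_fract hirra ha hm'
  have hmβ := notMem_beatty_iff_lt_fract hirrb hb hm'
  have hm1α := add_one_notMem_beatty_iff_fract_lt hirra ha (by linarith) hm'
  have hm1β := add_one_notMem_beatty_iff_fract_lt hirrb hb (by linarith) hm'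
  push_cast at hmα hmβ hm1α hm1β
  rw [hBtγ, hBtβ, Set.mem_ofPred_eq, Set.mem_ofPred_eq, exists_btil_eq_iff, not_or, not_and_or,
    not_and_or, hmα, hmβ, hm1α, hm1β]
  tauto

theorem Btgamma_mem_iff (α β γ : ℝ)
    (hirra : Irrational α) (hirrb : Irrational β) (hirrc : Irrational γ)
    (ha : 0 < α) (hb : 0 < β) (hc : 0 < γ) (hsum : α + β + γ = 1)
    (ha2 : α < 1 / 2) (hb2 : β < 1 / 2)
    (Btβ : Set ℤ) (hBtβ : Btβ = {x : ℤ | ∃ n : ℕ, 0 < n ∧ x = btil α β n})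
    (Btγ : Set ℤ) (hBtγ : Btγ = {x : ℤ | 0 < x ∧ x ∉ beatty α ∧ x ∉ Btβ})
    (m : ℕ) (hm : 0 < m) :
    (m : ℤ) ∈ Btγ ↔
      α < Int.fract (((m : ℝ) + 1) * α) ∧ β < Int.fract (((m : ℝ) + 1) * β) ∧
        (Int.fract (((m : ℝ) + 1) * α) < 1 - α ∨ Int.fract (((m : ℝ) + 1) * β) < 1 - β) :=
  Btgamma_mem_iff_general α β hirra hirrb ha hb ha2 hb2 Btβ hBtβ Btγ hBtγ m hm
end

section
/- Let α, β, γ be positive irrational numbers with α + β + γ = 1 such that α > 1/3 and 1, α, β are linearly independent over ℚ. Then there exist infinitely many positive integers m with m ∈ B_α, m + 1 ∈ B_β ∩ B_γ, and m + 2 ∈ B_α. -/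
/-
Put n = m + 1, x = nα - p and y = nβ - q. Then m ∈ B_α, m + 2 ∈ B_α, m + 1 ∈ B_β and
m + 1 ∈ B_γ, with the witnesses p, p + 1, q + 1 and n - p - q - 1 (recall γ = 1 - α - β),
amount to (x, y) lying in an explicit open region, which is nonempty because α > 1/3. Since
1, α, β are linearly independent over ℚ, Kronecker's theorem puts (nα, nβ) modulo ℤ² into this
region for arbitrarily large n.

Kronecker's theorem is proved by Bohr's argument. For T(n) = 1 + ∑ᵢ e(nθᵢ - aᵢ) with d terms
in the sum, expand |T(n)|^{2K} over pairs of words of length K in the d + 1 letters. Pairs with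
the same letter counts contribute 1 for every n; by the independence the other pairs have
nonintegral frequencies, so their geometric sums over n < N stay bounded. Hence the mean of
|T(n)|^{2K} tends to the number D of such pairs, and D ≥ (d + 1)^{2K} / (K + 1)^{d + 1} by
Cauchy–Schwarz. For K large this shows that |T(n)| comes arbitrarily close to d + 1, which
forces every e(nθᵢ - aᵢ) to be close to 1.
-/

open scoped Classical

open Finset Filter Topology
open scoped Real FourierTransform ComplexConjugate

lemma sq_card_le_card_mul_card_filter_eq {α β : Type*} [Fintype α] [DecidableEq β] (φ : α → β)
    (t : Finset β) (ht : ∀ a, φ a ∈ t) :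
    Fintype.card α ^ 2 ≤ #t * #{p : α × α | φ p.1 = φ p.2} := by
  have hfib : Fintype.card α = ∑ b ∈ t, #{a | φ a = b} :=
    card_eq_sum_card_fiberwise fun a _ => ht a
  have hpairs : #{p : α × α | φ p.1 = φ p.2} = ∑ b ∈ t, #{a | φ a = b} ^ 2 := by
    rw [card_eq_sum_card_fiberwise (f := fun p : α × α => φ p.1) fun p _ => ht p.1]
    refine sum_congr rfl fun b _ => ?_
    rw [sq, ← card_product, filter_filter]
    congr 1
    ext p
    simp only [mem_filter, mem_univ, true_and, mem_product]
    constructor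
    · rintro ⟨h, rfl⟩; exact ⟨rfl, h.symm⟩
    · rintro ⟨h1, h2⟩; exact ⟨h1.trans h2.symm, h1⟩
  rw [hfib, hpairs]
  exact sq_sum_le_card_mul_sum_sq

lemma exists_succ_pow_mul_pow_lt_one (d : ℕ) {r : ℝ} (hr₀ : 0 ≤ r) (hr : r < 1) :
    ∃ K : ℕ, ((K : ℝ) + 1) ^ d * r ^ K < 1 := by
  obtain ⟨s, hrs, hs⟩ := exists_between hr
  have hs₀ : 0 < s := hr₀.trans_lt hrs
  have hlim :=
    (tendsto_add_atTop_iff_nat 1).2 (tendsto_pow_const_mul_const_pow_of_lt_one d hs₀.le hs)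
  obtain ⟨K, hK⟩ := (hlim.eventually (gt_mem_nhds hs₀)).exists
  refine ⟨K, ?_⟩
  push_cast at hK
  rw [pow_succ, ← mul_assoc] at hK
  calc ((K : ℝ) + 1) ^ d * r ^ K ≤ ((K : ℝ) + 1) ^ d * s ^ K := by gcongr
    _ < 1 := lt_of_mul_lt_mul_right (by simpa using hK) hs₀.le

lemma exists_lt_of_forall_mul_sub_le_sum_range {F : ℕ → ℝ} {D B X : ℝ} (hX : X < D)
    (h : ∀ N : ℕ, D * N - B ≤ ∑ n ∈ range N, F n) : ∃ n, X < F n := by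
  by_contra! hF
  obtain ⟨N, hN⟩ := exists_nat_gt (B / (D - X))
  have hsum : ∑ n ∈ range N, F n ≤ N * X := by
    simpa using sum_le_sum fun n (_ : n ∈ range N) => hF n
  have := (div_lt_iff₀ (sub_pos.2 hX)).1 hN
  linarith [h N]

lemma norm_geom_sum_le {𝕜 : Type*} [NormedDivisionRing 𝕜] {z : 𝕜} (hz : ‖z‖ ≤ 1)
    (hz₁ : z ≠ 1) (N : ℕ) : ‖∑ n ∈ range N, z ^ n‖ ≤ 2 / ‖z - 1‖ := by
  rw [geom_sum_eq hz₁, norm_div]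
  gcongr
  calc ‖z ^ N - 1‖ ≤ ‖z ^ N‖ + ‖(1 : 𝕜)‖ := norm_sub_le _ _
    _ ≤ 2 := by rw [norm_pow, norm_one]; linarith [pow_le_one₀ (norm_nonneg z) hz (n := N)]

lemma norm_add_sum_le_norm_add_add_card {E ι : Type*} [SeminormedAddCommGroup E] [Fintype ι]
    (x : E) {z : ι → E} (hz : ∀ j, ‖z j‖ ≤ 1) (i : ι) :
    ‖x + ∑ j, z j‖ ≤ ‖x + z i‖ + (Fintype.card ι - 1) := by
  rw [← add_sum_erase _ _ (mem_univ i), ← add_assoc]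
  refine (norm_add_le _ _).trans (add_le_add_right ?_ _)
  calc ‖∑ j ∈ univ.erase i, z j‖ ≤ ∑ j ∈ univ.erase i, (1 : ℝ) :=
        (norm_sum_le _ _).trans (sum_le_sum fun j _ => hz j)
    _ = Fintype.card ι - 1 := by
        rw [sum_const, card_erase_of_mem (mem_univ i), card_univ, nsmul_one,
          Nat.cast_pred (Fintype.card_pos_iff.2 ⟨i⟩)]

lemma AddChar.map_sum_eq_prod {ι A M : Type*} [AddCommMonoid A] [CommMonoid M]
    (ψ : AddChar A M) (s : Finset ι) (f : ι → A) : ψ (∑ i ∈ s, f i) = ∏ i ∈ s, ψ (f i) := by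
  induction s using Finset.cons_induction with
  | empty => simp
  | cons a s ha ih => rw [sum_cons, prod_cons, AddChar.map_add_eq_mul, ih]

namespace Real

lemma fourierChar_eq_one_iff {x : ℝ} : 𝐞 x = 1 ↔ ∃ m : ℤ, x = m := by
  rw [fourierChar_apply', Circle.exp_eq_one]
  refine exists_congr fun m => ?_
  rw [mul_comm (m : ℝ), mul_right_inj' (by positivity)]

lemma norm_one_add_fourierChar_sq (x : ℝ) :
    ‖1 + (𝐞 x : ℂ)‖ ^ 2 = 2 + 2 * cos (2 * π * x) := by
  rw [← Complex.normSq_eq_norm_sq, Complex.normSq_apply]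
  simp only [fourierChar_apply, Complex.add_re, Complex.add_im, Complex.one_re, Complex.one_im,
    Complex.exp_ofReal_mul_I_re, Complex.exp_ofReal_mul_I_im]
  linear_combination sin_sq_add_cos_sq (2 * π * x)

lemma exists_int_abs_sub_lt_of_cos_lt {δ u : ℝ} (hδ₀ : 0 ≤ δ) (hδ : δ ≤ 1 / 2)
    (h : cos (2 * π * δ) < cos (2 * π * u)) : ∃ p : ℤ, |u - p| < δ := by
  refine ⟨round u, ?_⟩
  have hu : cos (2 * π * u) = cos (2 * π * |u - round u|) := by
    rw [← abs_of_pos two_pi_pos, ← abs_mul, abs_of_pos two_pi_pos, cos_abs,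
      show 2 * π * (u - round u) = 2 * π * u - (round u : ℤ) * (2 * π) by ring,
      cos_sub_int_mul_two_pi]
  rw [hu] at h
  have hmem : ∀ t, 0 ≤ t → t ≤ 1 / 2 → 2 * π * t ∈ Set.Icc 0 π := fun t h0 h1 =>
    ⟨by positivity, by nlinarith [pi_pos]⟩
  have := (strictAntiOn_cos.lt_iff_gt (hmem _ hδ₀ hδ) (hmem _ (abs_nonneg _)
    (abs_sub_round u))).mp h
  nlinarith [pi_pos]

lemma norm_one_add_fourierChar_lt_two {δ : ℝ} (hδ₀ : 0 < δ) (hδ : δ ≤ 1 / 2) :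
    ‖1 + (𝐞 δ : ℂ)‖ < 2 := by
  have hcos : cos (2 * π * δ) < 1 := by
    simpa using strictAntiOn_cos (Set.left_mem_Icc.mpr pi_pos.le)
      ⟨by positivity, by nlinarith [pi_pos]⟩ (by positivity)
  have := norm_one_add_fourierChar_sq δ
  nlinarith [norm_nonneg (1 + (𝐞 δ : ℂ))]

lemma exists_int_abs_sub_lt_of_norm_one_add_fourierChar_lt {δ u : ℝ} (hδ₀ : 0 ≤ δ)
    (hδ : δ ≤ 1 / 2) (h : ‖1 + (𝐞 δ : ℂ)‖ < ‖1 + (𝐞 u : ℂ)‖) : ∃ p : ℤ, |u - p| < δ := by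
  refine exists_int_abs_sub_lt_of_cos_lt hδ₀ hδ ?_
  have := pow_lt_pow_left₀ h (norm_nonneg _) two_ne_zero
  rw [norm_one_add_fourierChar_sq, norm_one_add_fourierChar_sq] at this
  linarith

end Real

namespace Kronecker

section Words

variable {κ : Type*} {K : ℕ}

def phase (v : κ → ℝ) (f : Fin K → κ) : ℝ := ∑ k, v (f k)

noncomputable def counts (f : Fin K → κ) (j : κ) : ℕ := #{k | f k = j}

lemma phase_add_mul (w v : κ → ℝ) (x : ℝ) (f : Fin K → κ) :
    phase (fun j => w j + x * v j) f = phase w f + x * phase v f := by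
  simp only [phase, sum_add_distrib, mul_sum]

variable [Fintype κ]

-- Letter counts of two words of equal length differ by a vector of sum zero, so only such
-- integer vectors need to be excluded.
abbrev NoIntRelation (v : κ → ℝ) : Prop :=
  ∀ c : κ → ℤ, ∑ j, c j = 0 → ∀ m : ℤ, ∑ j, c j * v j = m → c = 0

lemma phase_eq_sum_counts (v : κ → ℝ) (f : Fin K → κ) :
    phase v f = ∑ j, (counts f j : ℝ) * v j := by
  rw [phase, ← sum_fiberwise univ f]
  refine sum_congr rfl fun j _ => ?_
  rw [counts, sum_congr rfl fun k hk => by rw [(mem_filter.1 hk).2], sum_const, nsmul_eq_mul]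

lemma sum_counts (f : Fin K → κ) : ∑ j, counts f j = K := by
  simp only [counts]
  rw [← card_eq_sum_card_fiberwise fun k _ => mem_univ (f k), card_univ, Fintype.card_fin]

lemma counts_mem_piFinset (f : Fin K → κ) :
    counts f ∈ Fintype.piFinset fun _ => range (K + 1) := by
  rw [Fintype.mem_piFinset]
  intro j
  rw [mem_range, Nat.lt_succ_iff]
  exact (card_filter_le _ _).trans (by simp)

lemma counts_eq_of_phase_sub_eq_intCast {v : κ → ℝ} (hv : NoIntRelation v)
    {f g : Fin K → κ} {m : ℤ} (h : phase v f - phase v g = m) : counts f = counts g := by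
  have hc := hv (fun j => counts f j - counts g j)
    (by simp only [sum_sub_distrib, ← Nat.cast_sum, sum_counts, sub_self]) m
    (by push_cast; simpa [sub_mul, sum_sub_distrib, phase_eq_sum_counts] using h)
  funext j
  exact_mod_cast sub_eq_zero.1 (congrFun hc j)

end Words

variable {κ : Type*} [Fintype κ]

lemma pow_card_le_card_mul_card_counts_eq (K : ℕ) :
    Fintype.card κ ^ (2 * K) ≤
      (K + 1) ^ Fintype.card κ *
        #{p : (Fin K → κ) × (Fin K → κ) | counts p.1 = counts p.2} := by
  have := sq_card_le_card_mul_card_filter_eq (counts (K := K) (κ := κ)) _ counts_mem_piFinset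
  rw [Fintype.card_fun, Fintype.card_fin, ← pow_mul, mul_comm] at this
  simpa using this

lemma ofReal_norm_sum_fourierChar_pow (x : κ → ℝ) (K : ℕ) :
    ((‖∑ j, (𝐞 (x j) : ℂ)‖ ^ (2 * K) : ℝ) : ℂ) =
      ∑ p : (Fin K → κ) × (Fin K → κ), (𝐞 (phase x p.1 - phase x p.2) : ℂ) := by
  have hpow : (∑ j, (𝐞 (x j) : ℂ)) ^ K = ∑ f : Fin K → κ, (𝐞 (phase x f) : ℂ) := by
    rw [Fintype.sum_pow]
    refine sum_congr rfl fun f _ => ?_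
    rw [phase, AddChar.map_sum_eq_prod]
    exact (map_prod Circle.coeHom (fun k => 𝐞 (x (f k))) univ).symm
  rw [pow_mul, Complex.ofReal_pow, Complex.ofReal_pow, ← Complex.mul_conj', mul_pow, ← map_pow,
    hpow, map_sum, sum_mul_sum, ← univ_product_univ, sum_product]
  refine sum_congr rfl fun f _ => sum_congr rfl fun g _ => ?_
  rw [Circle.starRingEnd_addChar, ← Circle.coe_mul, ← AddChar.map_add_eq_mul, sub_eq_add_neg]

lemma ofReal_sum_range_norm_sum_fourierChar_pow (w v : κ → ℝ) (K N : ℕ) :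
    ((∑ n ∈ range N, ‖∑ j, (𝐞 (w j + n * v j) : ℂ)‖ ^ (2 * K) : ℝ) : ℂ) =
      ∑ p : (Fin K → κ) × (Fin K → κ), (𝐞 (phase w p.1 - phase w p.2) : ℂ) *
        ∑ n ∈ range N, (𝐞 (phase v p.1 - phase v p.2) : ℂ) ^ n := by
  push_cast
  simp_rw [← Complex.ofReal_pow, ofReal_norm_sum_fourierChar_pow, mul_sum]
  rw [sum_comm]
  refine sum_congr rfl fun p _ => sum_congr rfl fun n _ => ?_
  rw [phase_add_mul, phase_add_mul, ← Circle.coe_pow, ← AddChar.map_nsmul_eq_pow,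
    ← Circle.coe_mul, ← AddChar.map_add_eq_mul, nsmul_eq_mul]
  ring_nf

lemma exists_forall_mul_sub_le_sum_range {v : κ → ℝ} (hv : NoIntRelation v) (w : κ → ℝ)
    (K : ℕ) : ∃ B : ℝ, ∀ N : ℕ,
      (#{p : (Fin K → κ) × (Fin K → κ) | counts p.1 = counts p.2} : ℝ) * N - B ≤
        ∑ n ∈ range N, ‖∑ j, (𝐞 (w j + n * v j) : ℂ)‖ ^ (2 * K) := by
  set Δ : (κ → ℝ) → (Fin K → κ) × (Fin K → κ) → ℝ := fun u p => phase u p.1 - phase u p.2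
  refine ⟨∑ p with counts p.1 ≠ counts p.2, 2 / ‖(𝐞 (Δ v p) : ℂ) - 1‖, fun N => ?_⟩
  have hdiag : ∀ p ∈ ({p | counts p.1 = counts p.2} : Finset ((Fin K → κ) × (Fin K → κ))),
      (𝐞 (Δ w p) : ℂ) * ∑ n ∈ range N, (𝐞 (Δ v p) : ℂ) ^ n = N := by
    intro p hp
    have hcounts := (mem_filter.1 hp).2
    simp [Δ, phase_eq_sum_counts _ p.1, phase_eq_sum_counts _ p.2, hcounts]
  have hoff : ∀ p ∈ ({p | counts p.1 ≠ counts p.2} : Finset ((Fin K → κ) × (Fin K → κ))),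
      ‖(𝐞 (Δ w p) : ℂ) * ∑ n ∈ range N, (𝐞 (Δ v p) : ℂ) ^ n‖ ≤
        2 / ‖(𝐞 (Δ v p) : ℂ) - 1‖ := by
    intro p hp
    have hne : (𝐞 (Δ v p) : ℂ) ≠ 1 := by
      rw [Ne, Circle.coe_eq_one, Real.fourierChar_eq_one_iff]
      rintro ⟨m, hm⟩
      exact (mem_filter.1 hp).2 (counts_eq_of_phase_sub_eq_intCast hv hm)
    rw [norm_mul, Circle.norm_coe, one_mul]
    exact norm_geom_sum_le (Circle.norm_coe _).le hne N
  have hsum := ofReal_sum_range_norm_sum_fourierChar_pow w v K N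
  rw [← sum_filter_add_sum_filter_not univ fun p => counts p.1 = counts p.2,
    sum_congr rfl hdiag, sum_const, nsmul_eq_mul] at hsum
  have hre := congrArg Complex.re hsum
  simp only [Complex.ofReal_re, Complex.add_re, Complex.mul_re, Complex.natCast_re,
    Complex.natCast_im, mul_zero, sub_zero] at hre
  rw [hre]
  have := (abs_le.1 (Complex.abs_re_le_norm _)).1.trans'
    (neg_le_neg ((norm_sum_le _ _).trans (sum_le_sum hoff)))
  linarith

theorem exists_lt_norm_sum_fourierChar {v : κ → ℝ} (hv : NoIntRelation v) (w : κ → ℝ) {ρ : ℝ}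
    (hρ : ρ < Fintype.card κ) : ∃ n : ℕ, ρ < ‖∑ j, (𝐞 (w j + n * v j) : ℂ)‖ := by
  rcases lt_or_ge ρ 0 with hρ₀ | hρ₀
  · exact ⟨0, hρ₀.trans_le (norm_nonneg _)⟩
  have hc : (0 : ℝ) < Fintype.card κ := hρ₀.trans_lt hρ
  obtain ⟨K, hK⟩ := exists_succ_pow_mul_pow_lt_one (Fintype.card κ)
    (sq_nonneg (ρ / Fintype.card κ)) (by rw [div_pow, div_lt_one (by positivity)]; gcongr)
  have hcount : (Fintype.card κ : ℝ) ^ (2 * K) ≤ ((K : ℝ) + 1) ^ Fintype.card κ *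
      #{p : (Fin K → κ) × (Fin K → κ) | counts p.1 = counts p.2} := by
    exact_mod_cast pow_card_le_card_mul_card_counts_eq (κ := κ) K
  have hD : ρ ^ (2 * K) < #{p : (Fin K → κ) × (Fin K → κ) | counts p.1 = counts p.2} := by
    refine lt_of_mul_lt_mul_left ?_
      (by positivity : (0 : ℝ) ≤ ((K : ℝ) + 1) ^ Fintype.card κ)
    refine lt_of_lt_of_le ?_ hcount
    rw [← pow_mul, div_pow] at hK
    rwa [mul_div_assoc', div_lt_one (by positivity)] at hK
  obtain ⟨B, hB⟩ := exists_forall_mul_sub_le_sum_range hv w K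
  obtain ⟨n, hn⟩ := exists_lt_of_forall_mul_sub_le_sum_range hD hB
  exact ⟨n, lt_of_pow_lt_pow_left₀ _ (norm_nonneg _) hn⟩

lemma noIntRelation_vecCons_zero {d : ℕ} {θ : Fin d → ℝ}
    (hθ : LinearIndependent ℚ (Matrix.vecCons 1 θ)) : NoIntRelation (Matrix.vecCons 0 θ) := by
  intro c hc m h
  have hcoeff := Fintype.linearIndependent_iff.1 hθ (Fin.cons (-m) fun i => c i.succ) (by
    simp only [Fin.sum_univ_succ] at h ⊢
    simp only [Matrix.cons_val_zero, Matrix.cons_val_succ, Fin.cons_zero, Fin.cons_succ,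
      Rat.smul_def] at h ⊢
    push_cast at h ⊢
    linarith)
  have hsucc : ∀ i : Fin d, c i.succ = 0 := fun i => by
    simpa using hcoeff i.succ
  have h0 : c 0 = 0 := by simpa [Fin.sum_univ_succ, hsucc] using hc
  funext j
  exact Fin.cases h0 hsucc j

theorem exists_nat_abs_sub_lt {d : ℕ} {θ : Fin d → ℝ}
    (hθ : LinearIndependent ℚ (Matrix.vecCons 1 θ)) (a : Fin d → ℝ) {ε : ℝ} (hε : 0 < ε)
    (N₀ : ℕ) : ∃ n ≥ N₀, ∃ p : Fin d → ℤ, ∀ i, |n * θ i - a i - p i| < ε := by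
  set δ := min ε (1 / 2)
  have hδ₀ : 0 < δ := lt_min hε one_half_pos
  -- Index 0 carries the constant term 1 of T(n); the shift by N₀ is absorbed into `w`.
  set v : Fin (d + 1) → ℝ := Matrix.vecCons 0 θ
  set w : Fin (d + 1) → ℝ := Matrix.vecCons 0 fun i => N₀ * θ i - a i
  obtain ⟨n, hn⟩ := exists_lt_norm_sum_fourierChar (noIntRelation_vecCons_zero hθ) w
    (ρ := d - 1 + ‖1 + (𝐞 δ : ℂ)‖) (by
      rw [Fintype.card_fin, Nat.cast_succ]
      linarith [Real.norm_one_add_fourierChar_lt_two hδ₀ (min_le_right ε (1 / 2))])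
  have hsum : ∑ j, (𝐞 (w j + n * v j) : ℂ) = 1 + ∑ i, (𝐞 ((N₀ + n : ℕ) * θ i - a i) : ℂ) := by
    simp only [v, w, Fin.sum_univ_succ, Matrix.cons_val_zero, Matrix.cons_val_succ, mul_zero,
      add_zero, AddChar.map_zero_eq_one, Circle.coe_one]
    congr 2 with i
    push_cast
    ring_nf
  have hnear : ∀ i, ∃ p : ℤ, |(N₀ + n : ℕ) * θ i - a i - p| < δ := fun i => by
    refine Real.exists_int_abs_sub_lt_of_norm_one_add_fourierChar_lt hδ₀.le
      (min_le_right _ _) ?_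
    have := norm_add_sum_le_norm_add_add_card 1
      (fun j => (Circle.norm_coe (𝐞 ((N₀ + n : ℕ) * θ j - a j))).le) i
    rw [hsum] at hn
    simp only [Fintype.card_fin] at this
    linarith
  choose p hp using hnear
  exact ⟨N₀ + n, Nat.le_add_right _ _, p, fun i => (hp i).trans_le (min_le_left _ _)⟩

theorem exists_nat_mem_of_isOpen {d : ℕ} {θ : Fin d → ℝ}
    (hθ : LinearIndependent ℚ (Matrix.vecCons 1 θ)) {U : Set (Fin d → ℝ)} (hU : IsOpen U)
    (hne : U.Nonempty) (N₀ : ℕ) :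
    ∃ n ≥ N₀, ∃ p : Fin d → ℤ, (fun i => n * θ i - p i) ∈ U := by
  obtain ⟨a, ha⟩ := hne
  obtain ⟨ε, hε, hball⟩ := Metric.isOpen_iff.1 hU a ha
  obtain ⟨n, hn, p, hp⟩ := exists_nat_abs_sub_lt hθ a hε N₀
  refine ⟨n, hn, p, hball ((dist_pi_lt_iff hε).2 fun i => ?_)⟩
  rw [Real.dist_eq, sub_right_comm]
  exact hp i

end Kronecker

lemma mem_beatty_of_lt_of_lt {α : ℝ} (hα : 0 < α) {m j : ℤ} (hm : 0 ≤ m) (h₁ : m * α < j)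
    (h₂ : j < (m + 1) * α) : m ∈ beatty α := by
  have hj : (0 : ℝ) < j := lt_of_le_of_lt (by positivity) h₁
  have hj' : ((j.toNat : ℕ) : ℝ) = j := by
    exact_mod_cast Int.toNat_of_nonneg (by exact_mod_cast hj.le)
  refine ⟨j.toNat, by rw [← Nat.cast_pos (α := ℝ), hj']; exact hj, ?_⟩
  rw [eq_comm, Int.floor_eq_iff, hj', le_div_iff₀ hα, div_lt_iff₀ hα]
  exact ⟨h₁.le, h₂⟩

theorem infinitely_many_patterns_general (α β γ : ℝ)
    (ha : 0 < α) (hb : 0 < β) (hc : 0 < γ) (hsum : α + β + γ = 1)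
    (halpha : 1 / 3 < α)
    (hli : LinearIndependent ℚ ![(1 : ℝ), α, β]) :
    ∀ N : ℤ, ∃ m : ℤ, N < m ∧ 0 < m ∧
      m ∈ beatty α ∧ (m + 1) ∈ beatty β ∧ (m + 1) ∈ beatty γ ∧ (m + 2) ∈ beatty α := by
  intro N
  set U : Set (Fin 2 → ℝ) := {x | x 0 < α ∧ 1 - 2 * α < x 0 ∧
    1 - β < x 1 ∧ x 1 < 1 ∧ 1 < x 0 + x 1 ∧ x 0 + x 1 < 1 + γ}
  have hU : IsOpen U := by
    simp only [U, Set.ofPred_and]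
    apply_rules [IsOpen.inter, isOpen_lt, continuous_const, continuous_apply, Continuous.add]
  have hne : U.Nonempty := ⟨![(β + γ) / 2, 1 - β / 2], by
    simp only [U, Set.mem_ofPred_eq, Matrix.cons_val_zero, Matrix.cons_val_one]
    refine ⟨?_, ?_, ?_, ?_, ?_, ?_⟩ <;> linarith⟩
  obtain ⟨n, hn, p, hx, hx', hy, hy', hxy, hxy'⟩ :=
    Kronecker.exists_nat_mem_of_isOpen hli hU hne (N.toNat + 2)
  simp only [Matrix.cons_val_zero, Matrix.cons_val_one] at hx hx' hy hy' hxy hxy'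
  have hN : N ≤ N.toNat := Int.self_le_toNat N
  have hγ : γ = 1 - α - β := by linarith
  subst hγ
  refine ⟨n - 1, by omega, by omega,
    mem_beatty_of_lt_of_lt ha (j := p 0) ?_ ?_ ?_,
    mem_beatty_of_lt_of_lt hb (j := p 1 + 1) ?_ ?_ ?_,
    mem_beatty_of_lt_of_lt hc (j := n - p 0 - p 1 - 1) ?_ ?_ ?_,
    mem_beatty_of_lt_of_lt ha (j := p 0 + 1) ?_ ?_ ?_⟩
  all_goals first | omega | (push_cast; linarith)

theorem infinitely_many_patterns (α β γ : ℝ)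
    (hirra : Irrational α) (hirrb : Irrational β) (hirrc : Irrational γ)
    (ha : 0 < α) (hb : 0 < β) (hc : 0 < γ) (hsum : α + β + γ = 1)
    (halpha : 1 / 3 < α)
    (hli : LinearIndependent ℚ ![(1 : ℝ), α, β]) :
    ∀ N : ℤ, ∃ m : ℤ, N < m ∧ 0 < m ∧
      m ∈ beatty α ∧ (m + 1) ∈ beatty β ∧ (m + 1) ∈ beatty γ ∧ (m + 2) ∈ beatty α :=
  infinitely_many_patterns_general α β γ ha hb hc hsum halpha hli
end
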